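/- Converse direction of Ville's theorem: if A is a measurable set of infinite binary sequences with fair-coin product measure zero, then there exists a martingale d : List Bool → ℝ≥0 (satisfying d(σ0)+d(σ1)=2·d(σ)) that succeeds on every x ∈ A, i.e. limsup_N d(x|_N) = ∞ for all x ∈ A. -/

import Mathlib

open MeasureTheory Filter

/-- The fair-coin product measure `μ^∞` on infinite binary sequences (pushforward of
Lebesgue measure on `[0,1)` under binary digit extraction). -/
noncomputable def muInf : Measure (ℕ → Bool) :=
  Measure.map (fun (t : ℝ) (n : ℕ) => decide (⌊t * 2 ^ (n + 1)⌋ % 2 = 1))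
    (volume.restrict (Set.Ico (0 : ℝ) 1))

/-- The initial segment `x|_N` (first `N` bits) of an infinite binary sequence. -/
def initSeg (x : ℕ → Bool) (N : ℕ) : List Bool := (List.range N).map x

/-!
Work directly on Cantor space. `muInf` is a finite Borel measure on the metrizable space
`ℕ → Bool`, hence outer regular, so the null set `A` lies in open sets `U k` with
`muInf (U k) ≤ 4⁻ᵏ`. The gambler betting according to the conditional measure of `U k` has
capital `2^|σ| · muInf ([σ] ∩ U k)` after seeing `σ`; this is at most `2^|σ| · 4⁻ᵏ`, and it is at
least `1` once the cylinder `[σ]` lies inside `U k`, which happens along every `x ∈ U k` because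
`U k` is open. Staking `2^k` on the `k`-th gambler for all `k` at once keeps the capital finite
but makes it tend to `∞` along every `x ∈ A`. The only fact about binary digits needed is
`muInf [σ] ≥ 2^-|σ|`: the preimage of `[σ]` contains the dyadic interval coded by `σ`.
-/

open scoped ENNReal Topology

lemma initSeg_length (x : ℕ → Bool) (N : ℕ) : (initSeg x N).length = N := by
  simp [initSeg]

lemma initSeg_succ (x : ℕ → Bool) (N : ℕ) : initSeg x (N + 1) = initSeg x N ++ [x N] := by
  simp [initSeg, List.range_succ]

def cyl (σ : List Bool) : Set (ℕ → Bool) := {x | initSeg x σ.length = σ}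

lemma cyl_initSeg (x : ℕ → Bool) (N : ℕ) : cyl (initSeg x N) = PiNat.cylinder x N := by
  ext y
  rw [cyl, Set.mem_ofPred_eq, initSeg_length, PiNat.mem_cylinder_iff]
  simp only [initSeg, List.map_inj_left, List.mem_range]

lemma isOpen_cyl (σ : List Bool) : IsOpen (cyl σ) := by
  rcases (cyl σ).eq_empty_or_nonempty with h | ⟨x, hx⟩
  · simp [h]
  · rw [← show initSeg x σ.length = σ from hx, cyl_initSeg]
    exact PiNat.isOpen_cylinder _ x _

lemma mem_cyl_append {σ : List Bool} {b : Bool} {x : ℕ → Bool} :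
    x ∈ cyl (σ ++ [b]) ↔ x ∈ cyl σ ∧ x σ.length = b := by
  simp only [cyl, Set.mem_ofPred_eq, List.length_append, List.length_singleton, initSeg_succ]
  constructor
  · intro h
    obtain ⟨h₁, h₂⟩ := List.append_inj' h rfl
    exact ⟨h₁, List.singleton_inj.mp h₂⟩
  · rintro ⟨h₁, h₂⟩
    rw [h₁, h₂]

lemma cyl_eq_union (σ : List Bool) : cyl σ = cyl (σ ++ [false]) ∪ cyl (σ ++ [true]) := by
  ext x
  cases hx : x σ.length <;> simp [mem_cyl_append, hx]

lemma disjoint_cyl_append (σ : List Bool) : Disjoint (cyl (σ ++ [false])) (cyl (σ ++ [true])) :=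
  Set.disjoint_left.mpr fun x h₁ h₂ => by
    simp only [mem_cyl_append] at h₁ h₂
    simp [h₁.2] at h₂

lemma eventually_cyl_initSeg_subset {U : Set (ℕ → Bool)} (hU : IsOpen U) {x : ℕ → Bool}
    (hx : x ∈ U) : ∀ᶠ N in atTop, cyl (initSeg x N) ⊆ U := by
  obtain ⟨_, ⟨y, n, rfl⟩, hxy, hyU⟩ :=
    (PiNat.isTopologicalBasis_cylinders fun _ => Bool).exists_subset_of_mem_open hx hU
  filter_upwards [eventually_ge_atTop n] with N hN
  rw [cyl_initSeg]
  exact ((PiNat.cylinder_anti x hN).trans (PiNat.mem_cylinder_iff_eq.mp hxy).le).trans hyU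

def IsCoinMartingale (d : List Bool → ℝ≥0∞) : Prop :=
  ∀ σ, d (σ ++ [false]) + d (σ ++ [true]) = 2 * d σ

lemma IsCoinMartingale.const_mul {d : List Bool → ℝ≥0∞} (hd : IsCoinMartingale d) (c : ℝ≥0∞) :
    IsCoinMartingale fun σ => c * d σ := fun σ => by
  rw [← mul_add, hd σ, mul_left_comm]

lemma IsCoinMartingale.tsum {d : ℕ → List Bool → ℝ≥0∞} (hd : ∀ k, IsCoinMartingale (d k)) :
    IsCoinMartingale fun σ => ∑' k, d k σ := fun σ => by
  rw [← ENNReal.tsum_add, ← ENNReal.tsum_mul_left]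
  exact tsum_congr fun k => hd k σ

section DensityMartingale

variable (μ : Measure (ℕ → Bool))

noncomputable def densityMartingale (U : Set (ℕ → Bool)) (σ : List Bool) : ℝ≥0∞ :=
  2 ^ σ.length * μ (cyl σ ∩ U)

lemma isCoinMartingale_densityMartingale {U : Set (ℕ → Bool)} (hU : MeasurableSet U) :
    IsCoinMartingale (densityMartingale μ U) := fun σ => by
  have hsplit : μ (cyl (σ ++ [false]) ∩ U) + μ (cyl (σ ++ [true]) ∩ U) = μ (cyl σ ∩ U) := by
    rw [cyl_eq_union σ, Set.union_inter_distrib_right,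
      measure_union ((disjoint_cyl_append σ).mono Set.inter_subset_left Set.inter_subset_left)
        ((isOpen_cyl _).measurableSet.inter hU)]
  simp only [densityMartingale, List.length_append, List.length_singleton, ← hsplit]
  ring

lemma densityMartingale_le (U : Set (ℕ → Bool)) (σ : List Bool) :
    densityMartingale μ U σ ≤ 2 ^ σ.length * μ U := by
  rw [densityMartingale]
  gcongr
  exact Set.inter_subset_right

lemma one_le_densityMartingale {U : Set (ℕ → Bool)} {σ : List Bool} (hσU : cyl σ ⊆ U)
    (hμσ : 2⁻¹ ^ σ.length ≤ μ (cyl σ)) : 1 ≤ densityMartingale μ U σ := by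
  rw [densityMartingale, Set.inter_eq_left.mpr hσU, ← ENNReal.mul_inv_cancel
    (pow_ne_zero σ.length two_ne_zero) (ENNReal.pow_ne_top ENNReal.ofNat_ne_top),
    ENNReal.inv_pow]
  gcongr

end DensityMartingale

section CoverMartingale

variable {μ : Measure (ℕ → Bool)} {U : ℕ → Set (ℕ → Bool)}

variable (μ U) in
noncomputable def coverMartingale (σ : List Bool) : ℝ≥0∞ :=
  ∑' k, 2 ^ k * densityMartingale μ (U k) σ

lemma isCoinMartingale_coverMartingale (hU : ∀ k, MeasurableSet (U k)) :
    IsCoinMartingale (coverMartingale μ U) :=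
  IsCoinMartingale.tsum fun k => (isCoinMartingale_densityMartingale μ (hU k)).const_mul _

lemma coverMartingale_le (hU : ∀ k, μ (U k) ≤ 2⁻¹ ^ (2 * k)) (σ : List Bool) :
    coverMartingale μ U σ ≤ 2 ^ σ.length * 2 := by
  have hweight (k : ℕ) : (2 : ℝ≥0∞) ^ k * 2⁻¹ ^ (2 * k) = 2⁻¹ ^ k := by
    rw [two_mul, pow_add, ← mul_assoc, ← mul_pow, ENNReal.mul_inv_cancel two_ne_zero
      ENNReal.ofNat_ne_top, one_pow, one_mul]
  calc coverMartingale μ U σ ≤ ∑' k, 2 ^ k * (2 ^ σ.length * 2⁻¹ ^ (2 * k)) := by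
        refine ENNReal.tsum_le_tsum fun k => ?_
        gcongr
        exact (densityMartingale_le μ (U k) σ).trans (by gcongr; exact hU k)
    _ = 2 ^ σ.length * 2 := by
        simp only [mul_left_comm _ ((2 : ℝ≥0∞) ^ σ.length), hweight, ENNReal.tsum_mul_left,
          ENNReal.tsum_geometric_two]

lemma tendsto_coverMartingale_initSeg (hU : ∀ k, IsOpen (U k))
    (hμ : ∀ σ, 2⁻¹ ^ σ.length ≤ μ (cyl σ)) {x : ℕ → Bool} (hx : ∀ k, x ∈ U k) :
    Tendsto (fun N => coverMartingale μ U (initSeg x N)) atTop (𝓝 ∞) := by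
  refine ENNReal.tendsto_nhds_top_iff_nat.mpr fun n => ?_
  filter_upwards [eventually_cyl_initSeg_subset (hU n) (hx n)] with N hN
  calc (n : ℝ≥0∞) < 2 ^ n := by exact_mod_cast Nat.lt_two_pow_self
    _ ≤ 2 ^ n * densityMartingale μ (U n) (initSeg x N) :=
        le_mul_of_one_le_right' (one_le_densityMartingale μ hN (hμ _))
    _ ≤ coverMartingale μ U (initSeg x N) :=
        ENNReal.le_tsum (f := fun k => 2 ^ k * densityMartingale μ (U k) (initSeg x N)) n

end CoverMartingale

theorem exists_isCoinMartingale_tendsto_top_of_measure_eq_zero {μ : Measure (ℕ → Bool)}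
    [μ.OuterRegular] (hμ : ∀ σ, 2⁻¹ ^ σ.length ≤ μ (cyl σ)) {A : Set (ℕ → Bool)}
    (hA : μ A = 0) :
    ∃ d : List Bool → ℝ≥0∞, IsCoinMartingale d ∧ (∀ σ, d σ ≠ ∞) ∧
      ∀ x ∈ A, Tendsto (fun N => d (initSeg x N)) atTop (𝓝 ∞) := by
  have hcover (k : ℕ) : ∃ U ⊇ A, IsOpen U ∧ μ U < 2⁻¹ ^ (2 * k) :=
    Set.exists_isOpen_lt_of_lt A _
      (hA ▸ ENNReal.pow_pos (ENNReal.inv_pos.mpr ENNReal.ofNat_ne_top) _)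
  choose U hAU hUopen hUμ using hcover
  refine ⟨coverMartingale μ U, isCoinMartingale_coverMartingale fun k => (hUopen k).measurableSet,
    fun σ => ne_top_of_le_ne_top (by finiteness) (coverMartingale_le (fun k => (hUμ k).le) σ),
    fun x hx => tendsto_coverMartingale_initSeg hUopen hμ fun k => hAU k hx⟩

noncomputable def binaryDigits (t : ℝ) (n : ℕ) : Bool :=
  decide (⌊t * 2 ^ (n + 1)⌋ % 2 = 1)

lemma measurable_binaryDigits : Measurable binaryDigits :=
  measurable_pi_lambda _ fun _ =>
    (measurable_from_top (f := fun m : ℤ => decide (m % 2 = 1))).comp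
      (measurable_id.mul_const _).floor

def dyadicCode (σ : List Bool) : ℤ := σ.foldl (fun m b => 2 * m + b.toNat) 0

lemma dyadicCode_append (σ : List Bool) (b : Bool) :
    dyadicCode (σ ++ [b]) = 2 * dyadicCode σ + b.toNat := by
  simp [dyadicCode]

def dyadicInterval (σ : List Bool) : Set ℝ := {t | ⌊t * 2 ^ σ.length⌋ = dyadicCode σ}

lemma volume_dyadicInterval (σ : List Bool) : volume (dyadicInterval σ) = 2⁻¹ ^ σ.length := by
  have hσ : dyadicInterval σ = (· * 2 ^ σ.length) ⁻¹' (Int.floor ⁻¹' {dyadicCode σ}) := rfl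
  rw [hσ, Int.preimage_floor_singleton, Real.volume_preimage_mul_right (by positivity),
    Real.volume_Ico, add_sub_cancel_left, ENNReal.ofReal_one, mul_one, abs_inv, abs_pow,
    abs_two, ENNReal.ofReal_inv_of_pos (by positivity), ENNReal.ofReal_pow zero_le_two,
    ENNReal.ofReal_ofNat, ENNReal.inv_pow]

lemma mem_dyadicInterval_append {σ : List Bool} {b : Bool} {t : ℝ}
    (ht : t ∈ dyadicInterval (σ ++ [b])) :
    t ∈ dyadicInterval σ ∧ binaryDigits t σ.length = b := by
  simp only [dyadicInterval, Set.mem_ofPred_eq, List.length_append, List.length_singleton,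
    dyadicCode_append] at ht ⊢
  refine ⟨Int.floor_eq_iff.mpr ?_, by cases b <;> simp [binaryDigits, ht]⟩
  obtain ⟨hlo, hhi⟩ := Int.floor_eq_iff.mp ht
  rw [pow_succ] at hlo hhi
  cases b <;> simp only [Bool.toNat_false, Bool.toNat_true] at hlo hhi <;> push_cast at hlo hhi <;>
    constructor <;> linarith

lemma dyadicInterval_subset_preimage_cyl (σ : List Bool) :
    dyadicInterval σ ⊆ binaryDigits ⁻¹' cyl σ ∩ Set.Ico 0 1 := by
  induction σ using List.reverseRecOn with
  | nil =>
    intro t ht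
    exact ⟨rfl, Int.floor_eq_zero_iff.mp (by simpa [dyadicInterval, dyadicCode] using ht)⟩
  | append_singleton σ b ih =>
    intro t ht
    obtain ⟨htσ, hb⟩ := mem_dyadicInterval_append ht
    obtain ⟨hcyl, ht01⟩ := ih htσ
    exact ⟨mem_cyl_append.mpr ⟨hcyl, hb⟩, ht01⟩

lemma muInf_eq_map : muInf = (volume.restrict (Set.Ico (0 : ℝ) 1)).map binaryDigits := rfl

instance isFiniteMeasure_muInf : IsFiniteMeasure muInf := by
  rw [muInf_eq_map]
  infer_instance

lemma inv_two_pow_le_muInf_cyl (σ : List Bool) : 2⁻¹ ^ σ.length ≤ muInf (cyl σ) := by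
  rw [← volume_dyadicInterval, muInf_eq_map]
  refine le_trans ?_ (Measure.le_map_apply measurable_binaryDigits.aemeasurable _)
  rw [Measure.restrict_apply' measurableSet_Ico]
  exact measure_mono (dyadicInterval_subset_preimage_cyl σ)

theorem ville_converse_general (A : Set (ℕ → Bool)) (h0 : muInf A = 0) :
    ∃ d : List Bool → NNReal,
      (∀ σ : List Bool, d (σ ++ [false]) + d (σ ++ [true]) = 2 * d σ) ∧
      ∀ x ∈ A, limsup (fun N : ℕ => (d (initSeg x N) : ENNReal)) atTop = ⊤ := by
  obtain ⟨D, hmart, hfin, hsucc⟩ :=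
    exists_isCoinMartingale_tendsto_top_of_measure_eq_zero inv_two_pow_le_muInf_cyl h0
  refine ⟨fun σ => (D σ).toNNReal, fun σ => ?_, fun x hx => ?_⟩
  · rw [← ENNReal.toNNReal_add (hfin _) (hfin _), hmart σ, ENNReal.toNNReal_mul,
      ENNReal.toNNReal_ofNat]
  · simp only [ENNReal.coe_toNNReal (hfin _)]
    exact (hsucc x hx).limsup_eq

/-- Ville's theorem, converse direction: for every measurable set `A` of
binary sequences with `μ^∞(A) = 0` there is a martingale `d : List Bool → ℝ≥0`
(`d(σ0) + d(σ1) = 2·d(σ)`) that succeeds on every `x ∈ A`: `limsup_N d(x|_N) = ∞`. -/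
theorem ville_converse (A : Set (ℕ → Bool)) (hA : MeasurableSet A) (h0 : muInf A = 0) :
    ∃ d : List Bool → NNReal,
      (∀ σ : List Bool, d (σ ++ [false]) + d (σ ++ [true]) = 2 * d σ) ∧
      ∀ x ∈ A, limsup (fun N : ℕ => (d (initSeg x N) : ENNReal)) atTop = ⊤ :=
  ville_converse_general A h0
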